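/- Let p be a prime and let Ψ : ℤ_p[[X]] → ℤ_p[[X]] be a function such that for every g ∈ ℤ_p[[X]] there exist x_1, ..., x_{p-1} ∈ ℤ_p[[X]] with g = Ψ(g)((1+X)^p - 1)·1 + Σ_{i=1}^{p-1} (1+X)^i · x_i((1+X)^p - 1). Then for every positive integer a and all integers n ≥ 0, m ≥ 0, and every j ≥ 0, the coefficient of X^j in the a-fold iterate Ψ^a(X^n · (1+X)^m) equals the sum over all integers k with 0 ≤ k ≤ n and k ≡ -m (mod p^a) of (-1)^(n-k) · C(n,k) · C((k+m)/p^a, j) (viewed in ℤ_p). -/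

import Mathlib

/-!
Write `φ f = f((1 + X)^p - 1)`. The powers `(1 + X)^i`, `i < p`, are linearly independent over
`φ(ℤ_p⟦X⟧)`: modulo `p` the map `φ` becomes `f ↦ f(X^p)`, and comparing the coefficients of
`X^(pq+s)` gives a unitriangular system with the binomial coefficients `C(i, s)`; a relation
over `ℤ_p` is then divisible by every power of `p`, hence zero by Krull's intersection theorem.
So `Ψ g` is the uniquely determined `i = 0` component of `g`, which shows that `Ψ` sends
`(1 + X)^t` to `(1 + X)^(t/p)` when `p ∣ t` and to `0` otherwise, and is additive on
finite combinations of such powers. Expanding `X^n (1 + X)^m = ((1 + X) - 1)^n (1 + X)^m`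
in powers of `1 + X`, applying `Ψ^a` and reading off the coefficient of `X^j` gives the formula.
-/

open PowerSeries

/-- Substitution of a power series `g` with zero constant term into a power series `f`:
the coefficient of `X^d` in `f(g)` is `∑_{n ≤ d} (coeff n f) · (coeff d g^n)`.
(When the constant term of `g` vanishes, `coeff d (g^n) = 0` for `n > d`, so this is
the usual substitution `f ↦ f(g)`.) -/
noncomputable def PowerSeries.subst' {R : Type*} [CommRing R] (g f : R⟦X⟧) : R⟦X⟧ :=
  PowerSeries.mk fun d => ∑ n ∈ Finset.range (d + 1), coeff n f * coeff d (g ^ n)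

theorem sub_one_pow_mul_pow_eq_sum {A : Type*} [CommRing A] (y : A) (n m : ℕ) :
    (y - 1) ^ n * y ^ m =
      ∑ k ∈ Finset.range (n + 1), ((-1) ^ (n - k) * n.choose k : ℤ) • y ^ (k + m) := by
  rw [sub_pow, Finset.sum_mul]
  refine Finset.sum_congr rfl fun k _ => ?_
  have hsign : (-1 : A) ^ (k + n) = (-1) ^ (n - k) := by
    rw [show k + n = n - k + 2 * k by grind, pow_add, pow_mul]
    simp
  rw [hsign, zsmul_eq_mul, pow_add]
  push_cast
  ring

namespace PowerSeries

open Finset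

variable {R : Type*} [CommRing R]

theorem coeff_pow_eq_zero_of_lt {g : R⟦X⟧} (hg : constantCoeff g = 0) {d n : ℕ} (h : d < n) :
    coeff d (g ^ n) = 0 :=
  coeff_of_lt_order d <| (Nat.cast_lt.2 h).trans_le (le_order_pow_of_constantCoeff_eq_zero n hg)

theorem subst'_eq_subst {g : R⟦X⟧} (hg : constantCoeff g = 0) (f : R⟦X⟧) :
    subst' g f = subst g f := by
  ext d
  rw [coeff_subst' (.of_constantCoeff_zero' hg), subst', coeff_mk,
    finsum_eq_sum_of_support_subset (s := range (d + 1))]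
  · simp only [smul_eq_mul]
  · intro n hn
    contrapose! hn
    simp [coeff_pow_eq_zero_of_lt hg (by simpa using hn)]

theorem constantCoeff_one_add_X_pow_sub_one (p : ℕ) :
    constantCoeff ((1 + X : R⟦X⟧) ^ p - 1) = 0 := by
  simp

variable (R) in
/-- The Frobenius `φ f = f((1 + X)^p - 1)` of cyclotomic `(φ, Γ)`-modules. -/
noncomputable def cycloFrob (p : ℕ) : R⟦X⟧ →ₐ[R] R⟦X⟧ :=
  substAlgHom (.of_constantCoeff_zero' (constantCoeff_one_add_X_pow_sub_one p))

theorem cycloFrob_apply (p : ℕ) (f : R⟦X⟧) :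
    cycloFrob R p f = subst' ((1 + X) ^ p - 1) f := by
  rw [cycloFrob, coe_substAlgHom, subst'_eq_subst (constantCoeff_one_add_X_pow_sub_one p)]

theorem cycloFrob_X (p : ℕ) : cycloFrob R p X = (1 + X) ^ p - 1 :=
  substAlgHom_X _

theorem cycloFrob_one_add_X_pow (p s : ℕ) :
    cycloFrob R p ((1 + X) ^ s) = (1 + X) ^ (p * s) := by
  rw [map_pow, map_add, map_one, cycloFrob_X, add_sub_cancel, pow_mul]

theorem map_cycloFrob {S : Type*} [CommRing S] (σ : R →+* S) (p : ℕ) (f : R⟦X⟧) :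
    map σ (cycloFrob R p f) = cycloFrob S p (map σ f) := by
  rw [cycloFrob, cycloFrob, coe_substAlgHom, coe_substAlgHom]
  have := map_subst (h := σ) (.of_constantCoeff_zero' (constantCoeff_one_add_X_pow_sub_one p)) f
  have hφ : MvPowerSeries.map σ ((1 + X) ^ p - 1 : R⟦X⟧) = (1 + X) ^ p - 1 := by
    change map σ _ = _
    simp
  rwa [hφ] at this

theorem cycloFrob_eq_expand (p : ℕ) [Fact p.Prime] [CharP R p] (f : R⟦X⟧) :
    cycloFrob R p f = expand p (NeZero.ne p) f := by
  have : CharP R⟦X⟧ p := charP_of_injective_ringHom C_injective p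
  rw [cycloFrob, coe_substAlgHom, expand_apply, add_pow_char, one_pow, add_sub_cancel_left]

theorem coeff_one_add_X_pow (i d : ℕ) : coeff d ((1 + X : R⟦X⟧) ^ i) = i.choose d := by
  have : (1 + X : R⟦X⟧) ^ i = ((1 + Polynomial.X : Polynomial R) ^ i : Polynomial R) := by
    simp
  rw [this, Polynomial.coeff_coe, Polynomial.coeff_one_add_X_pow]

theorem coeff_one_add_X_pow_mul_expand {p : ℕ} (hp : p ≠ 0) {i s : ℕ} (hi : i < p) (hs : s < p)
    (f : R⟦X⟧) (q : ℕ) :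
    coeff (p * q + s) ((1 + X) ^ i * expand p hp f) = i.choose s * coeff q f := by
  rw [coeff_mul, sum_eq_single (s, p * q)]
  · rw [coeff_one_add_X_pow, coeff_expand_mul]
  · rintro ⟨u, v⟩ huv hne
    rw [HasAntidiagonal.mem_antidiagonal] at huv
    rw [coeff_one_add_X_pow, coeff_expand]
    rcases lt_or_ge i u with hiu | hui
    · rw [Nat.choose_eq_zero_of_lt hiu, Nat.cast_zero, zero_mul]
    split_ifs with hv
    · obtain ⟨w, rfl⟩ := hv
      have hus : u = s := by
        simpa [Nat.add_mul_mod_self_left, Nat.mod_eq_of_lt (hui.trans_lt hi),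
          Nat.mod_eq_of_lt hs] using congrArg (· % p) huv
      subst hus
      have hwq : w = q := Nat.eq_of_mul_eq_mul_left (Nat.pos_of_ne_zero hp) (by omega)
      exact absurd (by rw [hwq]) hne
    · rw [mul_zero]
  · exact fun h => (h (by simp [add_comm])).elim

theorem eq_zero_of_sum_one_add_X_pow_mul_expand_eq_zero {p : ℕ} (hp : p ≠ 0) {g : ℕ → R⟦X⟧}
    (H : ∑ i ∈ range p, (1 + X) ^ i * expand p hp (g i) = 0) {s : ℕ} (hs : s < p) : g s = 0 := by
  have hcoeff : ∀ s < p, ∀ q, ∑ i ∈ range p, (i.choose s : R) * coeff q (g i) = 0 := by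
    intro s hs q
    rw [← map_zero (coeff (p * q + s)), ← H, map_sum]
    exact sum_congr rfl fun i hi =>
      (coeff_one_add_X_pow_mul_expand hp (mem_range.1 hi) hs (g i) q).symm
  induction hk : p - s using Nat.strong_induction_on generalizing s with
  | _ k ih =>
    ext q
    have := hcoeff s hs q
    rwa [sum_eq_single s (fun i hi his => ?_) (by simp [hs]), Nat.choose_self, Nat.cast_one,
      one_mul] at this
    rcases his.lt_or_gt with hlt | hgt
    · rw [Nat.choose_eq_zero_of_lt hlt, Nat.cast_zero, zero_mul]
    · rw [ih (p - i) (by omega) (mem_range.1 hi) rfl, map_zero, mul_zero]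

section Padic

variable {p : ℕ} [Fact p.Prime]

theorem natCast_dvd_of_map_toZMod_eq_zero {f : ℤ_[p]⟦X⟧} (hf : map PadicInt.toZMod f = 0) :
    (p : ℤ_[p]⟦X⟧) ∣ f := by
  have hcoeff : ∀ d, ∃ c, coeff d f = p * c := fun d => by
    have : PadicInt.toZMod (coeff d f) = 0 := by rw [← coeff_map, hf, map_zero]
    rwa [← RingHom.mem_ker, PadicInt.ker_toZMod, PadicInt.maximalIdeal_eq_span_p,
      Ideal.mem_span_singleton] at this
  choose c hc using hcoeff
  exact ⟨mk c, by ext d; rw [hc, ← map_natCast C, coeff_C_mul, coeff_mk]⟩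

theorem natCast_dvd_of_sum_one_add_X_pow_mul_cycloFrob_eq_zero {g : ℕ → ℤ_[p]⟦X⟧}
    (H : ∑ i ∈ range p, (1 + X) ^ i * cycloFrob ℤ_[p] p (g i) = 0) {s : ℕ} (hs : s < p) :
    (p : ℤ_[p]⟦X⟧) ∣ g s := by
  refine natCast_dvd_of_map_toZMod_eq_zero <|
    eq_zero_of_sum_one_add_X_pow_mul_expand_eq_zero (NeZero.ne p)
      (g := fun i => map PadicInt.toZMod (g i)) ?_ hs
  simpa [map_sum, ← cycloFrob_eq_expand, ← map_cycloFrob] using congrArg (map PadicInt.toZMod) H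

theorem natCast_pow_dvd_of_sum_one_add_X_pow_mul_cycloFrob_eq_zero {g : ℕ → ℤ_[p]⟦X⟧}
    (H : ∑ i ∈ range p, (1 + X) ^ i * cycloFrob ℤ_[p] p (g i) = 0) (N : ℕ) {s : ℕ}
    (hs : s < p) : (p : ℤ_[p]⟦X⟧) ^ N ∣ g s := by
  induction N generalizing s with
  | zero => simp
  | succ N ih =>
    choose! h hh using fun s (hs : s < p) => ih hs
    have hpN : (p : ℤ_[p]⟦X⟧) ^ N ≠ 0 := by
      rw [← map_natCast C, ← map_pow, Ne, map_eq_zero_iff _ C_injective]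
      exact pow_ne_zero _ (Nat.cast_ne_zero.2 (NeZero.ne p))
    have Hh : ∑ i ∈ range p, (1 + X) ^ i * cycloFrob ℤ_[p] p (h i) = 0 := by
      refine (mul_eq_zero.1 ?_).resolve_left hpN
      rw [mul_sum, ← H]
      refine sum_congr rfl fun i hi => ?_
      rw [hh i (mem_range.1 hi), map_mul, map_pow, map_natCast]
      ring
    rw [hh s hs, pow_succ]
    exact mul_dvd_mul_left _ (natCast_dvd_of_sum_one_add_X_pow_mul_cycloFrob_eq_zero Hh hs)

theorem eq_zero_of_forall_natCast_pow_dvd {f : ℤ_[p]⟦X⟧} (h : ∀ N, (p : ℤ_[p]⟦X⟧) ^ N ∣ f) :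
    f = 0 := by
  have hI : Ideal.span {(p : ℤ_[p]⟦X⟧)} ≠ ⊤ := by
    rw [Ne, Ideal.span_singleton_eq_top, isUnit_iff_constantCoeff, map_natCast]
    exact PadicInt.p_nonunit
  rw [← Ideal.mem_bot, ← Ideal.iInf_pow_eq_bot_of_isDomain _ hI, Ideal.mem_iInf]
  intro N
  rw [Ideal.span_singleton_pow, Ideal.mem_span_singleton]
  exact h N

theorem eq_of_sum_one_add_X_pow_mul_cycloFrob_eq {x y : ℕ → ℤ_[p]⟦X⟧}
    (H : ∑ i ∈ range p, (1 + X) ^ i * cycloFrob ℤ_[p] p (x i) =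
      ∑ i ∈ range p, (1 + X) ^ i * cycloFrob ℤ_[p] p (y i)) {s : ℕ} (hs : s < p) :
    x s = y s := by
  rw [← sub_eq_zero]
  refine eq_zero_of_forall_natCast_pow_dvd fun N =>
    natCast_pow_dvd_of_sum_one_add_X_pow_mul_cycloFrob_eq_zero (g := fun i => x i - y i) ?_ N hs
  simp [mul_sub, sum_sub_distrib, H]

end Padic

def IsPsiOperator (p : ℕ) [Fact p.Prime] (Ψ : ℤ_[p]⟦X⟧ → ℤ_[p]⟦X⟧) : Prop :=
  ∀ g : ℤ_[p]⟦X⟧, ∃ x : ℕ → ℤ_[p]⟦X⟧,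
    g = subst' ((1 + X) ^ p - 1) (Ψ g) * 1 +
      ∑ i ∈ Icc 1 (p - 1), (1 + X) ^ i * subst' ((1 + X) ^ p - 1) (x i)

namespace IsPsiOperator

variable {p : ℕ} [Fact p.Prime] {Ψ : ℤ_[p]⟦X⟧ → ℤ_[p]⟦X⟧}

theorem apply_eq (hΨ : IsPsiOperator p Ψ) {g : ℤ_[p]⟦X⟧} (x : ℕ → ℤ_[p]⟦X⟧)
    (hg : g = ∑ i ∈ range p, (1 + X) ^ i * cycloFrob ℤ_[p] p (x i)) : Ψ g = x 0 := by
  obtain ⟨y, hy⟩ := hΨ g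
  have hrange : range p = insert 0 (Icc 1 (p - 1)) := by
    have := NeZero.pos p
    ext k
    simp only [mem_range, mem_insert, mem_Icc]
    omega
  have hg' : g = ∑ i ∈ range p, (1 + X) ^ i * cycloFrob ℤ_[p] p (Function.update y 0 (Ψ g) i) := by
    rw [hrange, sum_insert (by simp), Function.update_self, pow_zero, one_mul]
    conv_lhs => rw [hy]
    rw [mul_one, cycloFrob_apply]
    refine congrArg _ (sum_congr rfl fun i hi => ?_)
    rw [Function.update_of_ne (by simp at hi; omega), cycloFrob_apply]
  simpa using eq_of_sum_one_add_X_pow_mul_cycloFrob_eq (hg'.symm.trans hg) (NeZero.pos p)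

theorem apply_sum_smul_one_add_X_pow (hΨ : IsPsiOperator p Ψ) (s : Finset ℕ) (c : ℕ → ℤ_[p])
    (t : ℕ → ℕ) :
    Ψ (∑ k ∈ s, c k • (1 + X) ^ t k) = ∑ k ∈ s with p ∣ t k, c k • (1 + X) ^ (t k / p) := by
  refine (hΨ.apply_eq (fun i => ∑ k ∈ s with t k % p = i, c k • (1 + X) ^ (t k / p)) ?_).trans
    (by simp only [Nat.dvd_iff_mod_eq_zero])
  rw [← sum_fiberwise_of_maps_to (g := fun k => t k % p) (t := range p)
    (fun k _ => mem_range.2 (Nat.mod_lt _ (NeZero.pos p)))]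
  refine sum_congr rfl fun i _ => ?_
  rw [map_sum, mul_sum]
  refine sum_congr rfl fun k hk => ?_
  rw [map_smul, cycloFrob_one_add_X_pow, mul_smul_comm, ← pow_add, ← (mem_filter.1 hk).2,
    Nat.mod_add_div]

theorem iterate_apply_sum_smul_one_add_X_pow (hΨ : IsPsiOperator p Ψ) (a : ℕ) (s : Finset ℕ)
    (c : ℕ → ℤ_[p]) (t : ℕ → ℕ) :
    Ψ^[a] (∑ k ∈ s, c k • (1 + X) ^ t k) =
      ∑ k ∈ s with p ^ a ∣ t k, c k • (1 + X) ^ (t k / p ^ a) := by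
  induction a with
  | zero => simp
  | succ a ih =>
    rw [Function.iterate_succ_apply', ih, hΨ.apply_sum_smul_one_add_X_pow, filter_filter]
    refine sum_congr (filter_congr fun k _ => ?_) fun k _ => ?_
    · rw [pow_succ]
      exact ⟨fun ⟨ha, hp⟩ => (Nat.dvd_div_iff_mul_dvd ha).1 hp,
        fun h => ⟨dvd_of_mul_right_dvd h, (Nat.dvd_div_iff_mul_dvd (dvd_of_mul_right_dvd h)).2 h⟩⟩
    · rw [Nat.div_div_eq_div_mul, pow_succ]

end IsPsiOperator

end PowerSeries

theorem psi_iterate_coeff_formula_general (p : ℕ) [hp : Fact p.Prime]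
    (Ψ : PowerSeries ℤ_[p] → PowerSeries ℤ_[p])
    (hΨ : ∀ g : PowerSeries ℤ_[p], ∃ x : ℕ → PowerSeries ℤ_[p],
      g = PowerSeries.subst' ((1 + X) ^ p - 1) (Ψ g) * 1 +
        ∑ i ∈ Finset.Icc 1 (p - 1), (1 + X) ^ i * PowerSeries.subst' ((1 + X) ^ p - 1) (x i))
    (a : ℕ) (n m j : ℕ) :
    coeff j (Ψ^[a] (X ^ n * (1 + X) ^ m)) =
      ((∑ k ∈ (Finset.range (n + 1)).filter
          (fun k : ℕ => (k : ℤ) ≡ -(m : ℤ) [ZMOD ((p : ℤ) ^ a)]),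
        (-1) ^ (n - k) * (n.choose k : ℤ) *
          Ring.choose (((k : ℤ) + m) / (p : ℤ) ^ a) j : ℤ) : ℤ_[p]) := by
  have hfilter : ∀ k : ℕ, (k : ℤ) ≡ -(m : ℤ) [ZMOD ((p : ℤ) ^ a)] ↔ p ^ a ∣ k + m := fun k => by
    rw [Int.modEq_iff_dvd, show -(m : ℤ) - k = -((k + m : ℕ) : ℤ) by push_cast; ring, dvd_neg,
      ← Nat.cast_pow, Int.natCast_dvd_natCast]
  have hdiv : ∀ k : ℕ, ((k : ℤ) + m) / (p : ℤ) ^ a = ((k + m) / p ^ a : ℕ) := fun k => by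
    push_cast; rfl
  have hexpand := sub_one_pow_mul_pow_eq_sum (1 + X : ℤ_[p]⟦X⟧) n m
  rw [add_sub_cancel_left] at hexpand
  rw [hexpand]
  simp_rw [← Int.cast_smul_eq_zsmul ℤ_[p]]
  rw [IsPsiOperator.iterate_apply_sum_smul_one_add_X_pow hΨ, map_sum, Int.cast_sum]
  simp only [hfilter, hdiv, coeff_smul, coeff_one_add_X_pow, Ring.choose_natCast]
  push_cast
  rfl

/-- **Lemma 4.2** (with `r = -m`): if `Ψ : ℤ_p[[X]] → ℤ_p[[X]]` sends each `g` to its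
`0`-th component in the basis `{(1+X)^i}_{i<p}` over the image of substitution by
`(1+X)^p - 1`, then for `a > 0` and `n, m, j ≥ 0`, the coefficient of `X^j` in
`Ψ^a(X^n (1+X)^m)` equals `∑_{k ≡ -m mod p^a} (-1)^(n-k) C(n,k) C((k+m)/p^a, j)`. -/
theorem psi_iterate_coeff_formula (p : ℕ) [hp : Fact p.Prime]
    (Ψ : PowerSeries ℤ_[p] → PowerSeries ℤ_[p])
    (hΨ : ∀ g : PowerSeries ℤ_[p], ∃ x : ℕ → PowerSeries ℤ_[p],
      g = PowerSeries.subst' ((1 + X) ^ p - 1) (Ψ g) * 1 +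
        ∑ i ∈ Finset.Icc 1 (p - 1), (1 + X) ^ i * PowerSeries.subst' ((1 + X) ^ p - 1) (x i))
    (a : ℕ) (ha : 0 < a) (n m j : ℕ) :
    coeff j (Ψ^[a] (X ^ n * (1 + X) ^ m)) =
      ((∑ k ∈ (Finset.range (n + 1)).filter
          (fun k : ℕ => (k : ℤ) ≡ -(m : ℤ) [ZMOD ((p : ℤ) ^ a)]),
        (-1) ^ (n - k) * (n.choose k : ℤ) *
          Ring.choose (((k : ℤ) + m) / (p : ℤ) ^ a) j : ℤ) : ℤ_[p]) :=
  psi_iterate_coeff_formula_general p (hp := hp) Ψ hΨ a n m j
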